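/- A D-loop Q(·) is isotopic to a group if and only if Φ₁ = {φ₁ ∘ φ_j⁻¹ : j ∈ Q} is closed under composition of permutations. -/

import Mathlib

/-!
Write `σ_j = φ₁ ∘ φ_j⁻¹`. Since `φ₁ = (·)_R⁻¹` and `(x·y)_R⁻¹ = y_R⁻¹·x_R⁻¹`, the value `σ_j(y)`
is the unique `c` with `y_R⁻¹ · c = j_R⁻¹`; hence a permutation `f` lies in `Φ₁` exactly when
`y_R⁻¹ · f(y)` does not depend on `y`.

If `γ(x·y) = α(x) * β(y)` into a group, then `γ(x·w) = γ(x·v) * γ(x'·v)⁻¹ * γ(x'·w)`; taking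
`x = y_R⁻¹`, `v = σ_k(y)`, `x' = v_R⁻¹`, `w = σ_j(v)` shows that `y_R⁻¹ · σ_j(σ_k(y))` is constant.

Conversely, evaluating the spin `σ_a ∘ σ_b ∈ Φ₁` at `y = u_R⁻¹` and at `y = 1`, for suitable
`a, b`, gives `(u·v)_R⁻¹ · (u·w) = v_R⁻¹ · w`. With `v = 1` this is the left inverse property,
and the two together give associativity: `Q` is itself a group.
-/

/-- A binary operation `mul` on `Q` is isotopic to a group if there are a group
operation on `Q` and bijections `α, β, γ` of `Q` with `γ(x·y) = α(x)*β(y)`. -/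
def IsotopicToGroup {Q : Type*} (mul : Q → Q → Q) : Prop :=
  ∃ (g : Q → Q → Q) (e : Q) (ginv : Q → Q),
    (∀ a b c, g (g a b) c = g a (g b c)) ∧
    (∀ a, g e a = a) ∧ (∀ a, g a e = a) ∧
    (∀ a, g (ginv a) a = e) ∧
    ∃ α β γ : Q → Q, Function.Bijective α ∧ Function.Bijective β ∧
      Function.Bijective γ ∧ ∀ x y, γ (mul x y) = g (α x) (β y)

open Function Equiv

section

variable {Q : Type*}

/-- Right division is not assumed: it follows from the tracks and the involutivity of `rinv`. -/
structure IsDLoop (mul : Q → Q → Q) (one : Q) (rinv : Q → Q) (φ : Q → Perm Q) : Prop where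
  mul_left_injective : ∀ a, Injective (mul a)
  one_mul : ∀ x, mul one x = x
  mul_one : ∀ x, mul x one = x
  mul_rinv : ∀ a, mul a (rinv a) = one
  rinv_mul : ∀ x y, rinv (mul x y) = mul (rinv y) (rinv x)
  mul_track : ∀ a x, mul x (φ a x) = a

def spins (one : Q) (φ : Q → Perm Q) : Set (Perm Q) :=
  {f | ∃ j, f = φ one * (φ j)⁻¹}

theorem isotope_mul_eq {G : Type*} [Group G] {mul : Q → Q → Q} {α β γ : Q → G}
    (h : ∀ x y, γ (mul x y) = α x * β y) (x x' v w : Q) :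
    γ (mul x w) = γ (mul x v) * (γ (mul x' v))⁻¹ * γ (mul x' w) := by
  simp only [h]
  group

theorem isotopicToGroup_of_group_axioms {mul : Q → Q → Q} {one : Q} {inv : Q → Q}
    (hassoc : ∀ a b c, mul (mul a b) c = mul a (mul b c)) (hone_mul : ∀ a, mul one a = a)
    (hmul_one : ∀ a, mul a one = a) (hinv_mul : ∀ a, mul (inv a) a = one) :
    IsotopicToGroup mul :=
  ⟨mul, one, inv, hassoc, hone_mul, hmul_one, hinv_mul, id, id, id,
    bijective_id, bijective_id, bijective_id, fun _ _ => rfl⟩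

namespace IsDLoop

variable {mul : Q → Q → Q} {one : Q} {rinv : Q → Q} {φ : Q → Perm Q}

theorem track_one_apply (hQ : IsDLoop mul one rinv φ) (x : Q) : φ one x = rinv x :=
  hQ.mul_left_injective x <| (hQ.mul_track one x).trans (hQ.mul_rinv x).symm

theorem rinv_one (hQ : IsDLoop mul one rinv φ) : rinv one = one :=
  hQ.mul_left_injective one <| (hQ.mul_rinv one).trans (hQ.one_mul one).symm

theorem rinv_mul_self (hQ : IsDLoop mul one rinv φ) (x : Q) : mul (rinv x) x = one := by
  obtain ⟨y, rfl⟩ : ∃ y, rinv y = x := ⟨(φ one)⁻¹ x, by rw [← hQ.track_one_apply]; simp⟩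
  simpa only [hQ.mul_rinv, hQ.rinv_one] using (hQ.rinv_mul y (rinv y)).symm

theorem rinv_rinv (hQ : IsDLoop mul one rinv φ) (x : Q) : rinv (rinv x) = x :=
  hQ.mul_left_injective (rinv x) <| (hQ.mul_rinv _).trans (hQ.rinv_mul_self x).symm

theorem spin_apply_eq_iff (hQ : IsDLoop mul one rinv φ) (j y c : Q) :
    (φ one * (φ j)⁻¹) y = c ↔ mul (rinv y) c = rinv j := by
  have hxy : mul ((φ j)⁻¹ y) y = j := by simpa using hQ.mul_track j ((φ j)⁻¹ y)
  have hρj : rinv j = mul (rinv y) (rinv ((φ j)⁻¹ y)) := by rw [← hQ.rinv_mul, hxy]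
  rw [hρj, (hQ.mul_left_injective _).eq_iff, Perm.mul_apply, hQ.track_one_apply, eq_comm]

theorem mem_spins_iff (hQ : IsDLoop mul one rinv φ) (f : Perm Q) :
    f ∈ spins one φ ↔ ∀ y, mul (rinv y) (f y) = f one := by
  constructor
  · rintro ⟨j, rfl⟩ y
    have hone : (φ one * (φ j)⁻¹) one = rinv j :=
      (hQ.spin_apply_eq_iff j one _).2 (by rw [hQ.rinv_one, hQ.one_mul])
    rw [hone]
    exact (hQ.spin_apply_eq_iff j y _).1 rfl
  · intro hf
    refine ⟨rinv (f one), Equiv.ext fun y => ?_⟩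
    exact ((hQ.spin_apply_eq_iff _ y _).2 (by rw [hQ.rinv_rinv, hf])).symm

theorem mul_mem_spins_of_isotopicToGroup (hQ : IsDLoop mul one rinv φ)
    (hiso : IsotopicToGroup mul) {f g : Perm Q} (hf : f ∈ spins one φ) (hg : g ∈ spins one φ) :
    f * g ∈ spins one φ := by
  obtain ⟨gmul, e, ginv, hassoc, he_mul, -, hinv_mul, α, β, γ, -, -, hγ, hγmul⟩ := hiso
  let _ : Group Q := @Group.ofLeftAxioms Q ⟨gmul⟩ ⟨ginv⟩ ⟨e⟩ hassoc he_mul hinv_mul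
  rw [hQ.mem_spins_iff] at hf hg ⊢
  have hconst : ∀ y, γ (mul (rinv y) (f (g y))) = γ (g one) * (γ one)⁻¹ * γ (f one) := by
    intro y
    rw [isotope_mul_eq hγmul _ (rinv (g y)) (g y), hg, hQ.rinv_mul_self, hf]
  intro y
  apply hγ.1
  rw [Perm.mul_apply, Perm.mul_apply, hconst, ← hconst one, hQ.rinv_one, hQ.one_mul]

theorem rinv_mul_mul_mul_of_spins_closed (hQ : IsDLoop mul one rinv φ)
    (hclosed : ∀ f g, f ∈ spins one φ → g ∈ spins one φ → f * g ∈ spins one φ) (u v w : Q) :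
    mul (rinv (mul u v)) (mul u w) = mul (rinv v) w := by
  let σ (t : Q) : Perm Q := φ one * (φ (rinv t))⁻¹
  have hs (t y c : Q) : σ t y = c ↔ mul (rinv y) c = t :=
    (hQ.spin_apply_eq_iff _ y c).trans (by rw [hQ.rinv_rinv])
  have hv : σ (mul u v) (rinv u) = v := (hs _ _ _).2 (by rw [hQ.rinv_rinv])
  have hw : σ (mul (rinv v) w) v = w := (hs _ _ _).2 rfl
  have huv : σ (mul u v) one = mul u v := (hs _ _ _).2 (by rw [hQ.rinv_one, hQ.one_mul])
  have hcomp : mul (rinv (rinv u)) (σ (mul (rinv v) w) (σ (mul u v) (rinv u))) =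
      σ (mul (rinv v) w) (σ (mul u v) one) :=
    (hQ.mem_spins_iff _).1 (hclosed _ _ ⟨_, rfl⟩ ⟨_, rfl⟩) (rinv u)
  rw [hv, hw, huv, hQ.rinv_rinv] at hcomp
  exact (hs _ _ _).1 hcomp.symm

theorem mul_assoc_of_spins_closed (hQ : IsDLoop mul one rinv φ)
    (hclosed : ∀ f g, f ∈ spins one φ → g ∈ spins one φ → f * g ∈ spins one φ) (a b c : Q) :
    mul (mul a b) c = mul a (mul b c) := by
  have hcancel : ∀ u w, mul (rinv u) (mul u w) = w := fun u w => by
    simpa only [hQ.mul_one, hQ.rinv_one, hQ.one_mul] using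
      hQ.rinv_mul_mul_mul_of_spins_closed hclosed u one w
  refine hQ.mul_left_injective (rinv (mul a b)) ?_
  rw [hcancel, hQ.rinv_mul_mul_mul_of_spins_closed hclosed, hcancel]

end IsDLoop

end

theorem stmt_14_general {Q : Type*} (mul : Q → Q → Q) (one : Q)
    (hone_mul : ∀ x, mul one x = x) (hmul_one : ∀ x, mul x one = x)
    (hL : ∀ a, Function.Bijective (fun x => mul a x))
    (rinv : Q → Q) (hrinv : ∀ a, mul a (rinv a) = one)
    (hD : ∀ x y, rinv (mul x y) = mul (rinv y) (rinv x))
    (φ : Q → Equiv.Perm Q) (hφ : ∀ a x, mul x (φ a x) = a) :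
    IsotopicToGroup mul ↔
      (∀ f g : Equiv.Perm Q,
        f ∈ {f : Equiv.Perm Q | ∃ j, f = φ one * (φ j)⁻¹} →
        g ∈ {f : Equiv.Perm Q | ∃ j, f = φ one * (φ j)⁻¹} →
        f * g ∈ {f : Equiv.Perm Q | ∃ j, f = φ one * (φ j)⁻¹}) := by
  have hQ : IsDLoop mul one rinv φ := ⟨fun a => (hL a).1, hone_mul, hmul_one, hrinv, hD, hφ⟩
  constructor
  · exact fun hiso _ _ => hQ.mul_mem_spins_of_isotopicToGroup hiso
  · intro hclosed
    exact isotopicToGroup_of_group_axioms (hQ.mul_assoc_of_spins_closed hclosed) hone_mul hmul_one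
      hQ.rinv_mul_self

/-- A D-loop `Q(·)` is isotopic to a group iff
`Φ₁ = {φ₁ ∘ φ_j⁻¹ : j ∈ Q}` is closed under composition of permutations. -/
theorem stmt_14 {Q : Type*} (mul : Q → Q → Q) (one : Q)
    (hone_mul : ∀ x, mul one x = x) (hmul_one : ∀ x, mul x one = x)
    (hL : ∀ a, Function.Bijective (fun x => mul a x))
    (hR : ∀ a, Function.Bijective (fun x => mul x a))
    (rinv : Q → Q) (hrinv : ∀ a, mul a (rinv a) = one)
    (hD : ∀ x y, rinv (mul x y) = mul (rinv y) (rinv x))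
    (φ : Q → Equiv.Perm Q) (hφ : ∀ a x, mul x (φ a x) = a) :
    IsotopicToGroup mul ↔
      (∀ f g : Equiv.Perm Q,
        f ∈ {f : Equiv.Perm Q | ∃ j, f = φ one * (φ j)⁻¹} →
        g ∈ {f : Equiv.Perm Q | ∃ j, f = φ one * (φ j)⁻¹} →
        f * g ∈ {f : Equiv.Perm Q | ∃ j, f = φ one * (φ j)⁻¹}) :=
  stmt_14_general mul one hone_mul hmul_one hL rinv hrinv hD φ hφ
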